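/- Let λ be a partition all of whose parts are even. Then the Newell–Littlewood coefficient N^λ_{λλ} is at least 1. (This is the combinatorial content of the proposition that the representation ⊗³ detects the subgroup 𝕊_{∥λ∥}(G) of GL_N for G of type B_n, C_n, or D_{2n} when all parts of λ are even.) -/

import Mathlib

/-!
Halving every part of `λ` gives a partition `μ` such that row `i` of `λ/μ` has length
`μ_i`. Filling row `i` of `λ/μ` with the entry `i + 1` is then a Littlewood–Richardson
tableau of content `μ`: columns strictly increase trivially, and the reading word is a
lattice word because the row lengths `μ_i` weakly decrease. So `c^λ_{μμ} ≥ 1`, and the term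
`α = β = γ = μ` of the Newell–Littlewood sum is positive. It remains to see that the sum has
finite support: a nonzero `c^ν_{λμ}` confines `λ` and `μ` to lists whose length and entries
are bounded in terms of `ν`.
-/

/-- A partition: a weakly decreasing finite sequence (list) of positive
integers. -/
def IsPartition (l : List ℕ) : Prop :=
  l.Pairwise (· ≥ ·) ∧ ∀ x ∈ l, 0 < x

/-- The `i`-th part (0-indexed) of a partition, `0` beyond its length. -/
def part (l : List ℕ) (i : ℕ) : ℕ := l.getD i 0

/-- Cell `(i, j)` (row `i`, column `j`, both 0-indexed) lies in the skew
Young diagram `ν/λ`. -/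
def InSkew (nu lam : List ℕ) (i j : ℕ) : Prop :=
  part lam i ≤ j ∧ j < part nu i

/-- Cell `(i, j)` comes weakly before cell `(r, c)` in the reverse reading
order: rows are read top to bottom, and each row is read right to left. -/
def ReadingLE (i j r c : ℕ) : Prop := i < r ∨ (i = r ∧ c ≤ j)

/-- `T` is a Littlewood–Richardson tableau of shape `ν/λ` and content `μ`:
`λ ⊆ ν`, the entries of `T` are positive exactly on the cells of the skew
diagram `ν/λ`, entries weakly increase from left to right along rows,
entries strictly increase from top to bottom down columns, for every `j ≥ 1`
the entry `j` occurs exactly `μ_j` times, and the reverse reading word is a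
lattice word: every prefix contains at least as many occurrences of `j` as
of `j + 1`, for every `j ≥ 1`. -/
structure IsLRTableau (nu lam mu : List ℕ) (T : ℕ → ℕ → ℕ) : Prop where
  subset : ∀ i, part lam i ≤ part nu i
  support : ∀ i j, 0 < T i j ↔ InSkew nu lam i j
  row_weak : ∀ i j j', InSkew nu lam i j → InSkew nu lam i j' → j ≤ j' →
    T i j ≤ T i j'
  col_strict : ∀ i i' j, InSkew nu lam i j → InSkew nu lam i' j → i < i' →
    T i j < T i' j
  content : ∀ k : ℕ, {p : ℕ × ℕ | T p.1 p.2 = k + 1}.ncard = part mu k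
  lattice : ∀ r c k : ℕ,
    {p : ℕ × ℕ | T p.1 p.2 = k + 2 ∧ ReadingLE p.1 p.2 r c}.ncard ≤
    {p : ℕ × ℕ | T p.1 p.2 = k + 1 ∧ ReadingLE p.1 p.2 r c}.ncard

/-- The Littlewood–Richardson coefficient `c^ν_{λμ}`: the number of
Littlewood–Richardson tableaux of shape `ν/λ` and content `μ`. -/
noncomputable def lrCoeff (nu lam mu : List ℕ) : ℕ :=
  {T : ℕ → ℕ → ℕ | IsLRTableau nu lam mu T}.ncard

/-- The Newell–Littlewood coefficient
`N^ν_{λμ} = Σ_{α,β,γ} c^λ_{αβ} · c^μ_{αγ} · c^ν_{βγ}`, the sum running over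
all triples of partitions `(α, β, γ)` (only finitely many terms are
nonzero). -/
noncomputable def nlCoeff (lam mu nu : List ℕ) : ℕ :=
  ∑ᶠ x : {l : List ℕ // IsPartition l} × {l : List ℕ // IsPartition l} ×
      {l : List ℕ // IsPartition l},
    lrCoeff lam x.1.val x.2.1.val * lrCoeff mu x.1.val x.2.2.val *
      lrCoeff nu x.2.1.val x.2.2.val

lemma part_le_sum (l : List ℕ) (i : ℕ) : part l i ≤ l.sum := by
  rcases lt_or_ge i l.length with h | h
  · rw [part, List.getD_eq_getElem _ _ h]
    exact List.le_sum_of_mem (List.getElem_mem h)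
  · rw [part, List.getD_eq_default _ _ h]
    exact Nat.zero_le _

lemma lt_length_of_part_pos {l : List ℕ} {i : ℕ} (h : 0 < part l i) : i < l.length := by
  by_contra hi
  rw [part, List.getD_eq_default _ _ (not_lt.mp hi)] at h
  exact lt_irrefl 0 h

lemma part_mem {l : List ℕ} {i : ℕ} (h : i < l.length) : part l i ∈ l := by
  rw [part, List.getD_eq_getElem _ _ h]
  exact List.getElem_mem h

lemma exists_part_eq_of_mem {l : List ℕ} {x : ℕ} (hx : x ∈ l) :
    ∃ i < l.length, part l i = x := by
  obtain ⟨i, hi, rfl⟩ := List.mem_iff_getElem.mp hx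
  exact ⟨i, hi, List.getD_eq_getElem _ _ hi⟩

lemma part_of_forall_mem {p : ℕ → Prop} {l : List ℕ} (h0 : p 0) (h : ∀ x ∈ l, p x)
    (i : ℕ) : p (part l i) := by
  rcases lt_or_ge i l.length with hi | hi
  · exact h _ (part_mem hi)
  · rwa [part, List.getD_eq_default _ _ hi]

lemma part_map {f : ℕ → ℕ} (hf : f 0 = 0) (l : List ℕ) (i : ℕ) :
    part (l.map f) i = f (part l i) := by
  simpa only [part, hf] using List.getD_map (l := l) (d := 0) (n := i) f

lemma IsPartition.part_pos {l : List ℕ} (hl : IsPartition l) {i : ℕ} (h : i < l.length) :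
    0 < part l i :=
  hl.2 _ (part_mem h)

lemma IsPartition.antitone_part {l : List ℕ} (hl : IsPartition l) : Antitone (part l) := by
  intro k k' hkk'
  rcases lt_or_ge k' l.length with hk' | hk'
  · rcases hkk'.eq_or_lt with rfl | hlt
    · exact le_rfl
    · have hk : k < l.length := hlt.trans hk'
      rw [part, part, List.getD_eq_getElem _ _ hk', List.getD_eq_getElem _ _ hk]
      exact List.pairwise_iff_getElem.mp hl.1 k k' hk hk' hlt
  · rw [part, List.getD_eq_default _ _ hk']
    exact Nat.zero_le _

lemma IsPartition.map_div_two {l : List ℕ} (hl : IsPartition l) (heven : ∀ x ∈ l, Even x) :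
    IsPartition (l.map (· / 2)) := by
  refine ⟨hl.1.map _ fun a b hab => Nat.div_le_div_right hab, ?_⟩
  rintro _ hx
  obtain ⟨y, hy, rfl⟩ := List.mem_map.mp hx
  obtain ⟨c, rfl⟩ := heven y hy
  have := hl.2 _ hy
  omega

def cellBox (nu : List ℕ) : Finset (ℕ × ℕ) :=
  Finset.range nu.length ×ˢ Finset.range nu.sum

lemma card_cellBox (nu : List ℕ) : (cellBox nu).card = nu.length * nu.sum := by
  rw [cellBox, Finset.card_product, Finset.card_range, Finset.card_range]

lemma InSkew.mem_cellBox {nu lam : List ℕ} {i j : ℕ} (h : InSkew nu lam i j) :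
    (i, j) ∈ cellBox nu := by
  have hi : i < nu.length := lt_length_of_part_pos (Nat.zero_lt_of_lt h.2)
  have hj : j < nu.sum := h.2.trans_le (part_le_sum nu i)
  simp [cellBox, hi, hj]

namespace IsLRTableau

variable {nu lam mu : List ℕ} {T : ℕ → ℕ → ℕ}

lemma mem_cellBox (hT : IsLRTableau nu lam mu T) {i j : ℕ} (h : 0 < T i j) :
    (i, j) ∈ cellBox nu :=
  ((hT.support i j).mp h).mem_cellBox

lemma eq_zero_of_notMem_cellBox (hT : IsLRTableau nu lam mu T) {i j : ℕ}
    (h : (i, j) ∉ cellBox nu) : T i j = 0 :=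
  Nat.eq_zero_of_not_pos fun hpos => h (hT.mem_cellBox hpos)

lemma setOf_eq_succ_subset_cellBox (hT : IsLRTableau nu lam mu T) (k : ℕ) :
    {p : ℕ × ℕ | T p.1 p.2 = k + 1} ⊆ cellBox nu := fun _ hp =>
  hT.mem_cellBox (hp.symm ▸ k.succ_pos)

lemma part_content_le (hT : IsLRTableau nu lam mu T) (k : ℕ) :
    part mu k ≤ nu.length * nu.sum := by
  rw [← hT.content k, ← card_cellBox, ← Set.ncard_coe_finset]
  exact Set.ncard_le_ncard (hT.setOf_eq_succ_subset_cellBox k) (Finset.finite_toSet _)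

lemma content_le (hT : IsLRTableau nu lam mu T) {x : ℕ} (hx : x ∈ mu) :
    x ≤ nu.length * nu.sum := by
  obtain ⟨k, -, rfl⟩ := exists_part_eq_of_mem hx
  exact hT.part_content_le k

lemma part_content_pos_iff (hT : IsLRTableau nu lam mu T) (k : ℕ) :
    0 < part mu k ↔ ∃ p ∈ cellBox nu, T p.1 p.2 = k + 1 := by
  rw [← hT.content k, Set.ncard_pos ((Finset.finite_toSet _).subset
    (hT.setOf_eq_succ_subset_cellBox k))]
  exact ⟨fun ⟨p, hp⟩ => ⟨p, hT.setOf_eq_succ_subset_cellBox k hp, hp⟩,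
    fun ⟨p, _, hp⟩ => ⟨p, hp⟩⟩

lemma le_length_content (hT : IsLRTableau nu lam mu T) (i j : ℕ) : T i j ≤ mu.length := by
  rcases Nat.eq_zero_or_pos (T i j) with h0 | hpos
  · rw [h0]
    exact Nat.zero_le _
  · obtain ⟨k, hk⟩ := Nat.exists_eq_succ_of_ne_zero hpos.ne'
    have := lt_length_of_part_pos ((hT.part_content_pos_iff k).mpr
      ⟨(i, j), hT.mem_cellBox hpos, hk⟩)
    omega

lemma length_content_le (hT : IsLRTableau nu lam mu T) (hmu : IsPartition mu) :
    mu.length ≤ nu.length * nu.sum := by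
  have hsub : Finset.range mu.length ⊆ (cellBox nu).image fun p => T p.1 p.2 - 1 := by
    intro k hk
    obtain ⟨p, hp, hTp⟩ :=
      (hT.part_content_pos_iff k).mp (hmu.part_pos (Finset.mem_range.mp hk))
    exact Finset.mem_image.mpr ⟨p, hp, by omega⟩
  calc mu.length = (Finset.range mu.length).card := (Finset.card_range _).symm
    _ ≤ ((cellBox nu).image fun p => T p.1 p.2 - 1).card := Finset.card_le_card hsub
    _ ≤ (cellBox nu).card := Finset.card_image_le
    _ = nu.length * nu.sum := card_cellBox nu

lemma length_inner_le (hT : IsLRTableau nu lam mu T) (hlam : IsPartition lam) :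
    lam.length ≤ nu.length := by
  rcases Nat.eq_zero_or_pos lam.length with h | h
  · omega
  · have hlast : 0 < part nu (lam.length - 1) :=
      (hlam.part_pos (by omega)).trans_le (hT.subset _)
    have := lt_length_of_part_pos hlast
    omega

lemma inner_le (hT : IsLRTableau nu lam mu T) {x : ℕ} (hx : x ∈ lam) : x ≤ nu.sum := by
  obtain ⟨k, -, rfl⟩ := exists_part_eq_of_mem hx
  exact (hT.subset k).trans (part_le_sum nu k)

end IsLRTableau

lemma finite_setOf_isLRTableau (nu lam mu : List ℕ) :
    {T : ℕ → ℕ → ℕ | IsLRTableau nu lam mu T}.Finite := by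
  let restrict : (ℕ → ℕ → ℕ) → cellBox nu → ℕ := fun T p => T p.1.1 p.1.2
  refine Set.Finite.of_finite_image (f := restrict) ?_ ?_
  · refine (Set.Finite.pi (t := fun _ => Set.Iic mu.length) fun _ => Set.finite_Iic _).subset ?_
    rintro _ ⟨T, hT, rfl⟩ p -
    exact hT.le_length_content _ _
  · intro T hT T' hT' h
    funext i j
    by_cases hij : (i, j) ∈ cellBox nu
    · exact congrFun h ⟨(i, j), hij⟩
    · rw [hT.eq_zero_of_notMem_cellBox hij, hT'.eq_zero_of_notMem_cellBox hij]

lemma IsLRTableau.lrCoeff_pos {nu lam mu : List ℕ} {T : ℕ → ℕ → ℕ}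
    (hT : IsLRTableau nu lam mu T) : 0 < lrCoeff nu lam mu :=
  (Set.ncard_pos (finite_setOf_isLRTableau nu lam mu)).mpr ⟨T, hT⟩

def boundedLists (a b : ℕ) : Set (List ℕ) := {l | l.length ≤ a ∧ ∀ x ∈ l, x ≤ b}

lemma finite_boundedLists (a b : ℕ) : (boundedLists a b).Finite := by
  refine ((List.finite_length_le (Fin (b + 1)) a).image (List.map Fin.val)).subset ?_
  rintro l ⟨hlen, hle⟩
  refine ⟨l.pmap (fun x hx => (⟨x, hx⟩ : Fin (b + 1))) fun x hx => Nat.lt_succ_of_le (hle x hx),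
    by simpa using hlen, ?_⟩
  simp [List.map_pmap]

lemma mem_boundedLists_of_lrCoeff_ne_zero {nu lam mu : List ℕ} (hlam : IsPartition lam)
    (hmu : IsPartition mu) (h : lrCoeff nu lam mu ≠ 0) :
    lam ∈ boundedLists nu.length nu.sum ∧
      mu ∈ boundedLists (nu.length * nu.sum) (nu.length * nu.sum) := by
  obtain ⟨T, hT⟩ := Set.nonempty_of_ncard_ne_zero h
  exact ⟨⟨hT.length_inner_le hlam, fun _ => hT.inner_le⟩,
    ⟨hT.length_content_le hmu, fun _ => hT.content_le⟩⟩

lemma finite_support_nlCoeff_summand (lam mu nu : List ℕ) :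
    (Function.support fun x : {l : List ℕ // IsPartition l} × {l : List ℕ // IsPartition l} ×
        {l : List ℕ // IsPartition l} =>
      lrCoeff lam x.1.val x.2.1.val * lrCoeff mu x.1.val x.2.2.val *
        lrCoeff nu x.2.1.val x.2.2.val).Finite := by
  have hfin (a b : ℕ) : (Subtype.val ⁻¹' boundedLists a b : Set {l // IsPartition l}).Finite :=
    (finite_boundedLists a b).preimage Subtype.val_injective.injOn
  refine ((hfin lam.length lam.sum).prod
    ((hfin (lam.length * lam.sum) (lam.length * lam.sum)).prod
      (hfin (nu.length * nu.sum) (nu.length * nu.sum)))).subset ?_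
  rintro ⟨α, β, γ⟩ hx
  simp only [Function.mem_support, ne_eq, mul_eq_zero, not_or] at hx
  obtain ⟨⟨hαβ, -⟩, hβγ⟩ := hx
  obtain ⟨hα, hβ⟩ := mem_boundedLists_of_lrCoeff_ne_zero α.2 β.2 hαβ
  exact ⟨hα, hβ, (mem_boundedLists_of_lrCoeff_ne_zero β.2 γ.2 hβγ).2⟩

lemma lrCoeff_mul_le_nlCoeff (lam mu nu : List ℕ) (α β γ : {l : List ℕ // IsPartition l}) :
    lrCoeff lam α.val β.val * lrCoeff mu α.val γ.val * lrCoeff nu β.val γ.val ≤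
      nlCoeff lam mu nu :=
  single_le_finsum (α, β, γ) (finite_support_nlCoeff_summand lam mu nu) fun _ => Nat.zero_le _

open Classical in
noncomputable def rowFilling (nu lam : List ℕ) (i j : ℕ) : ℕ :=
  if InSkew nu lam i j then i + 1 else 0

section rowFilling

variable {nu lam : List ℕ}

lemma rowFilling_pos_iff {i j : ℕ} : 0 < rowFilling nu lam i j ↔ InSkew nu lam i j := by
  unfold rowFilling
  split_ifs with h <;> simp [h]

lemma rowFilling_eq_succ_iff {i j k : ℕ} :
    rowFilling nu lam i j = k + 1 ↔ i = k ∧ InSkew nu lam i j := by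
  unfold rowFilling
  split_ifs with h <;> simp [h]

lemma setOf_rowFilling_eq_succ (k : ℕ) :
    {p : ℕ × ℕ | rowFilling nu lam p.1 p.2 = k + 1} =
      ↑(({k} : Finset ℕ) ×ˢ Finset.Ico (part lam k) (part nu k)) := by
  ext ⟨i, j⟩
  simp only [Set.mem_ofPred_eq, rowFilling_eq_succ_iff, InSkew, Finset.coe_product,
    Finset.coe_singleton, Finset.coe_Ico, Set.mem_prod, Set.mem_singleton_iff, Set.mem_Ico]
  exact and_congr_right fun h => h ▸ Iff.rfl

lemma ncard_setOf_rowFilling_eq_succ (k : ℕ) :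
    {p : ℕ × ℕ | rowFilling nu lam p.1 p.2 = k + 1}.ncard = part nu k - part lam k := by
  rw [setOf_rowFilling_eq_succ, Set.ncard_coe_finset, Finset.card_product,
    Finset.card_singleton, Nat.card_Ico, one_mul]

lemma rowFilling_lattice {rho : List ℕ} (hrho : ∀ k, part rho k = part nu k - part lam k)
    (hanti : Antitone (part rho)) (r c k : ℕ) :
    {p : ℕ × ℕ | rowFilling nu lam p.1 p.2 = k + 2 ∧ ReadingLE p.1 p.2 r c}.ncard ≤
      {p : ℕ × ℕ | rowFilling nu lam p.1 p.2 = k + 1 ∧ ReadingLE p.1 p.2 r c}.ncard := by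
  rcases Nat.lt_or_ge k r with hkr | hrk
  · have hfull : {p : ℕ × ℕ | rowFilling nu lam p.1 p.2 = k + 1 ∧ ReadingLE p.1 p.2 r c} =
        {p : ℕ × ℕ | rowFilling nu lam p.1 p.2 = k + 1} := by
      ext ⟨i, j⟩
      simp only [Set.mem_ofPred_eq, and_iff_left_iff_imp, rowFilling_eq_succ_iff]
      rintro ⟨rfl, -⟩
      exact Or.inl hkr
    calc _ ≤ {p : ℕ × ℕ | rowFilling nu lam p.1 p.2 = k + 1 + 1}.ncard := by
          refine Set.ncard_le_ncard (fun p hp => hp.1) ?_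
          rw [setOf_rowFilling_eq_succ]
          exact Finset.finite_toSet _
      _ = part rho (k + 1) := by rw [ncard_setOf_rowFilling_eq_succ, hrho]
      _ ≤ part rho k := hanti k.le_succ
      _ = _ := by rw [hfull, ncard_setOf_rowFilling_eq_succ, hrho]
  · have hempty :
        {p : ℕ × ℕ | rowFilling nu lam p.1 p.2 = k + 2 ∧ ReadingLE p.1 p.2 r c} = ∅ := by
      ext ⟨i, j⟩
      simp only [Set.mem_ofPred_eq, Set.mem_empty_iff_false, iff_false, not_and,
        rowFilling_eq_succ_iff, ReadingLE]
      rintro ⟨rfl, -⟩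
      omega
    rw [hempty, Set.ncard_empty]
    exact Nat.zero_le _

theorem isLRTableau_rowFilling {rho : List ℕ} (hsub : ∀ i, part lam i ≤ part nu i)
    (hrho : ∀ k, part rho k = part nu k - part lam k) (hanti : Antitone (part rho)) :
    IsLRTableau nu lam rho (rowFilling nu lam) where
  subset := hsub
  support _ _ := rowFilling_pos_iff
  row_weak i j j' hj hj' _ := by simp [rowFilling, hj, hj']
  col_strict i i' j hi hi' hii' := by simpa [rowFilling, hi, hi'] using hii'
  content k := by rw [ncard_setOf_rowFilling_eq_succ, hrho]
  lattice := rowFilling_lattice hrho hanti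

end rowFilling

/-- If all parts of `λ` are even then `N^λ_{λλ} ≥ 1`; equivalently, `⊗³`
detects `𝕊_{∥λ∥}(G)` in this case. -/
theorem one_le_nlCoeff_of_even_parts (lam : List ℕ)
    (hlam : IsPartition lam) (heven : ∀ x ∈ lam, Even x) :
    1 ≤ nlCoeff lam lam lam := by
  set half := lam.map (· / 2)
  have hhalf : IsPartition half := hlam.map_div_two heven
  have hpart (k : ℕ) : part half k = part lam k / 2 := part_map (Nat.zero_div 2) lam k
  have hrow : IsLRTableau lam half half (rowFilling lam half) := by
    refine isLRTableau_rowFilling (fun i => ?_) (fun k => ?_) hhalf.antitone_part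
    · rw [hpart]
      exact Nat.div_le_self _ _
    · obtain ⟨c, hc⟩ := part_of_forall_mem Even.zero heven k
      rw [hpart, hc]
      omega
  have hc := hrow.lrCoeff_pos
  calc 1 ≤ lrCoeff lam half half * lrCoeff lam half half * lrCoeff lam half half :=
        Nat.mul_pos (Nat.mul_pos hc hc) hc
    _ ≤ nlCoeff lam lam lam :=
        lrCoeff_mul_le_nlCoeff lam lam lam ⟨half, hhalf⟩ ⟨half, hhalf⟩ ⟨half, hhalf⟩
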